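/- Let I be any index set and let t ∈ 𝕋^I. The homomorphism χ_t : H → 𝕋 is continuous if and only if there exist m ∈ ℕ, elements x_1, …, x_m ∈ ℤ^I and elements s_1, …, s_m ∈ 𝕋 such that t(i) = ∑_{k=1}^m x_k(i)·s_k for every i ∈ I. Consequently, the continuous characters of H are exactly the maps g ↦ ⟨g,t⟩ for such t; in particular, for I = ℕ this identifies the dual group of ℤ^(ℕ) ≅ Hom(ℤ^ℕ, ℤ) with the topology of pointwise convergence on ℤ^ℕ. -/

import Mathlib

/-- The circle group `𝕋 = ℝ/ℤ`. -/
abbrev Circ : Type := AddCircle (1 : ℝ)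

/-- For `g ∈ ℤ^(I)` (finitely supported) and `x ∈ ℤ^I`, the pairing `⟨g,x⟩ = ∑ g i * x i`. -/
def pairZ {I : Type*} (g : I →₀ ℤ) (x : I → ℤ) : ℤ := g.sum fun i n => n * x i

/-- The topology of pointwise convergence on `ℤ^I`: the coarsest topology on `H = ℤ^(I)`
making `g ↦ ⟨g,x⟩` continuous into the discrete group `ℤ`, for every `x ∈ ℤ^I`. -/
instance HZtop (I : Type*) : TopologicalSpace (I →₀ ℤ) :=
  TopologicalSpace.induced (fun g (x : I → ℤ) => pairZ g x) Pi.topologicalSpace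

/-- For `g ∈ ℤ^(I)` and `t ∈ 𝕋^I`, the (finite) sum `⟨g,t⟩ = ∑ g i • t i ∈ 𝕋`. -/
noncomputable def pairT {I : Type*} (g : I →₀ ℤ) (t : I → Circ) : Circ :=
  g.sum fun i n => n • t i

/-- `pairZ · x` as an additive hom. -/
noncomputable def pairZhom {I : Type*} (x : I → ℤ) : (I →₀ ℤ) →+ ℤ :=
  Finsupp.liftAddHom fun i => AddMonoidHom.mulRight (x i)

lemma pairZhom_apply {I : Type*} (x : I → ℤ) (g : I →₀ ℤ) : pairZhom x g = pairZ g x := rfl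

/-- `pairT · t` as an additive hom. -/
noncomputable def pairThom {I : Type*} (t : I → Circ) : (I →₀ ℤ) →+ Circ :=
  Finsupp.liftAddHom fun i => zmultiplesHom Circ (t i)

lemma pairThom_apply {I : Type*} (t : I → Circ) (g : I →₀ ℤ) : pairThom t g = pairT g t := rfl

lemma pairThom_single {I : Type*} (t : I → Circ) (i : I) : pairThom t (Finsupp.single i 1) = t i := by
  simp [pairThom]

lemma cont_pairZ {I : Type*} (x : I → ℤ) : Continuous fun g : I →₀ ℤ => pairZ g x := by
  show Continuous ((fun p : (I → ℤ) → ℤ => p x) ∘ (fun g (x : I → ℤ) => pairZ g x))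
  exact (continuous_apply x).comp continuous_induced_dom

lemma pairT_sum {I : Type*} (g : I →₀ ℤ) {m : ℕ} (x : Fin m → I → ℤ) (s : Fin m → Circ) :
    pairT g (fun i => ∑ k, x k i • s k) = ∑ k, pairZ g (x k) • s k := by
  unfold pairT pairZ
  simp_rw [Finsupp.sum, Finset.smul_sum, smul_smul]
  rw [Finset.sum_comm]
  simp_rw [← Finset.sum_smul]


lemma circ_norm_coe (x : ℝ) : ‖(x : Circ)‖ = |x - round x| := by
  simpa using AddCircle.norm_eq (p := 1) (x := x)

lemma round_zero_of (x : ℝ) (h1 : -(1/2) ≤ x) (h2 : x < 1/2) : round x = 0 := by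
  rw [round_eq, Int.floor_eq_zero_iff]
  constructor
  · simpa using by linarith
  · simpa using by linarith

lemma circ_small' (r : ℝ) (hr2 : |r| ≤ 1 / 2) (h : ∀ n : ℤ, ‖n • (r : Circ)‖ < 1 / 4) :
    r = 0 := by
  by_contra hr0
  have hrpos : 0 < |r| := abs_pos.mpr hr0
  rcases le_or_gt (1 / 4) |r| with hge | hlt
  · have h1 := h 1
    rw [one_smul, circ_norm_coe] at h1
    rcases abs_le.mp hr2 with ⟨hl, hu⟩
    rcases lt_or_ge r (1 / 2) with hltr | hger
    · rw [round_zero_of r hl hltr] at h1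
      simp at h1
      linarith
    · have hr : r = 1 / 2 := le_antisymm hu hger
      have hr12 : round (1 / 2 : ℝ) = 1 := by norm_num [round_eq]
      rw [hr, hr12, show |(1:ℝ)/2 - ((1:ℤ):ℝ)| = 1/2 by norm_num] at h1
      linarith
  · have harch : ∃ k : ℕ, 1 / 4 ≤ (k + 1) * |r| := by
      obtain ⟨k, hk⟩ := exists_nat_ge (1 / 4 / |r|)
      refine ⟨k, ?_⟩
      rw [div_le_iff₀ hrpos] at hk
      nlinarith
    set n := Nat.find harch with hn
    have h1 : 1 / 4 ≤ (n + 1) * |r| := Nat.find_spec harch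
    have h2 : (n + 1 : ℝ) * |r| < 1 / 2 := by
      rcases Nat.eq_zero_or_pos n with h0 | hpos
      · rw [h0]; norm_num; linarith
      · have hmin := Nat.find_min harch (m := n - 1) (by omega)
        push_neg at hmin
        have : ((n - 1 : ℕ) + 1 : ℝ) = (n : ℝ) := by
          have : (n - 1 : ℕ) + 1 = n := by omega
          exact_mod_cast congrArg (fun k : ℕ => (k : ℝ)) this
        rw [this] at hmin
        push_cast
        nlinarith
    have hN := h ((n + 1 : ℕ) : ℤ)
    have hcast : (((n + 1 : ℕ) : ℤ) • (r : Circ)) = (((((n + 1 : ℕ) : ℤ) : ℝ) * r : ℝ) : Circ) := by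
      rw [show (((n + 1 : ℕ) : ℤ) : ℝ) * r = ((n + 1 : ℕ) : ℤ) • r from (zsmul_eq_mul _ _).symm]
      exact_mod_cast rfl
    rw [hcast, circ_norm_coe] at hN
    push_cast at hN
    have habs : |((n : ℝ) + 1) * r| = ((n : ℝ) + 1) * |r| := by
      rw [abs_mul, abs_of_nonneg (by positivity : (0:ℝ) ≤ (n : ℝ) + 1)]
    have habslt : |((n : ℝ) + 1) * r| < 1 / 2 := by rw [habs]; exact h2
    have hround : round (((n : ℝ) + 1) * r) = 0 := by
      rcases abs_lt.mp habslt with ⟨ha, hb⟩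
      exact round_zero_of _ (by linarith) hb
    rw [hround] at hN
    simp only [Int.cast_zero, sub_zero] at hN
    rw [habs] at hN
    linarith

lemma circ_small (a : Circ) (h : ∀ n : ℤ, ‖n • a‖ < 1 / 4) : a = 0 := by
  obtain ⟨y, rfl⟩ : ∃ y : ℝ, (y : Circ) = a := Quotient.exists_rep a
  have h0 : (((round y : ℤ) : ℝ) : Circ) = 0 := by
    rw [AddCircle.coe_eq_zero_iff]
    exact ⟨round y, by rw [zsmul_eq_mul, mul_one]⟩
  have hry : ((y - round y : ℝ) : Circ) = (y : Circ) := by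
    rw [sub_eq_add_neg, show ((y + -((round y : ℤ) : ℝ) : ℝ) : Circ)
      = (y : Circ) + ((-((round y : ℤ) : ℝ) : ℝ) : Circ) from rfl]
    rw [show ((-((round y : ℤ) : ℝ) : ℝ) : Circ) = -(((round y : ℤ) : ℝ) : Circ) from rfl,
      h0, neg_zero, add_zero]
  have := circ_small' (y - round y) (abs_sub_round y) (by rw [hry]; exact h)
  rw [← hry, this]
  norm_num

lemma pairZ_zero {I : Type*} (x : I → ℤ) : pairZ (0 : I →₀ ℤ) x = 0 := by
  rw [← pairZhom_apply]; exact map_zero _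

lemma pairZ_zsmul {I : Type*} (n : ℤ) (g : I →₀ ℤ) (x : I → ℤ) :
    pairZ (n • g) x = n • pairZ g x := by
  rw [← pairZhom_apply, ← pairZhom_apply]; exact map_zsmul _ _ _

lemma pairT_zsmul {I : Type*} (n : ℤ) (g : I →₀ ℤ) (t : I → Circ) :
    pairT (n • g) t = n • pairT g t := by
  rw [← pairThom_apply, ← pairThom_apply]; exact map_zsmul _ _ _

/-- Step A: from continuity, get finitely many `x`'s whose common kernel is killed. -/
lemma exists_finset_kernel {I : Type*} (t : I → Circ)
    (h : Continuous fun g : I →₀ ℤ => pairT g t) :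
    ∃ (m : ℕ) (x : Fin m → (I → ℤ)),
      ∀ g : I →₀ ℤ, (∀ k, pairZ g (x k) = 0) → pairT g t = 0 := by
  have h00 : pairT (0 : I →₀ ℤ) t = 0 := by
    rw [← pairThom_apply]; exact map_zero _
  have hV : Metric.ball (0 : Circ) (1 / 4) ∈ nhds (0 : Circ) :=
    Metric.ball_mem_nhds _ (by norm_num)
  have hmem : (fun g : I →₀ ℤ => pairT g t) ⁻¹' Metric.ball (0 : Circ) (1 / 4)
      ∈ nhds (0 : I →₀ ℤ) := by
    have := h.continuousAt (x := (0 : I →₀ ℤ))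
    rw [ContinuousAt, h00] at this
    exact this hV
  have hnhds : nhds (0 : I →₀ ℤ)
      = Filter.comap (fun g (x : I → ℤ) => pairZ g x) (nhds (fun _ => 0)) := by
    have he0 : (fun x : I → ℤ => pairZ (0 : I →₀ ℤ) x) = fun _ => (0 : ℤ) :=
      funext fun x => pairZ_zero x
    rw [← he0]
    exact nhds_induced _ _
  rw [hnhds, Filter.mem_comap] at hmem
  obtain ⟨S, hS, hSsub⟩ := hmem
  rw [nhds_pi, Filter.mem_pi'] at hS
  obtain ⟨F, T, hT, hTS⟩ := hS
  refine ⟨F.card, fun k => (F.equivFin.symm k : I → ℤ), fun g hg => ?_⟩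
  have hgF : ∀ x ∈ F, pairZ g x = 0 := by
    intro x hx
    have := hg (F.equivFin ⟨x, hx⟩)
    simpa using this
  apply circ_small
  intro n
  have hmemV : pairT (n • g) t ∈ Metric.ball (0 : Circ) (1 / 4) := by
    apply hSsub
    apply hTS
    intro x hx
    have h1 : pairZ (n • g) x = 0 := by
      rw [pairZ_zsmul, hgF x hx, smul_zero]
    show pairZ (n • g) x ∈ T x
    rw [h1]
    have := hT x
    rw [nhds_discrete, Filter.mem_pure] at this
    exact this
  rw [← pairT_zsmul]
  simpa [Metric.mem_ball, dist_zero_right] using hmemV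


lemma forward {I : Type*} (t : I → Circ) (h : Continuous fun g : I →₀ ℤ => pairT g t) :
    ∃ (m : ℕ) (x : Fin m → (I → ℤ)) (s : Fin m → Circ),
      ∀ i : I, t i = ∑ k, x k i • s k := by
  obtain ⟨m, xF, hF⟩ := exists_finset_kernel t h
  let Ψ : (I →₀ ℤ) →ₗ[ℤ] (Fin m → ℤ) := LinearMap.pi fun k => (pairZhom (xF k)).toIntLinearMap
  have hΨ : ∀ (g : I →₀ ℤ) (k : Fin m), Ψ g k = pairZ g (xF k) := fun g k => rfl
  obtain ⟨r, b⟩ := Submodule.basisOfPid (Pi.basisFun ℤ (Fin m)) (LinearMap.range Ψ)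
  have hbj : ∀ j, ∃ g : I →₀ ℤ, Ψ g = ((b j : LinearMap.range Ψ) : Fin m → ℤ) :=
    fun j => LinearMap.mem_range.mp (b j).2
  choose gg hgg using hbj
  refine ⟨r, fun j i => b.repr ⟨Ψ (Finsupp.single i 1), LinearMap.mem_range_self Ψ _⟩ j,
    fun j => pairT (gg j) t, ?_⟩
  intro i
  set v : LinearMap.range Ψ := ⟨Ψ (Finsupp.single i 1), LinearMap.mem_range_self Ψ _⟩ with hv
  have hsum := b.sum_repr v
  have hsum' : Ψ (Finsupp.single i 1) = Ψ (∑ j, b.repr v j • gg j) := by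
    have hc := congrArg (Subtype.val) hsum
    rw [map_sum]
    simp only [Submodule.coe_sum, SetLike.val_smul] at hc
    rw [show Ψ (Finsupp.single i 1) = ((v : LinearMap.range Ψ) : Fin m → ℤ) from rfl, ← hc]
    apply Finset.sum_congr rfl
    intro j _
    rw [map_smul, hgg]
  set d : I →₀ ℤ := Finsupp.single i 1 - ∑ j, b.repr v j • gg j with hd
  have hdker : ∀ k, pairZ d (xF k) = 0 := by
    intro k
    have : Ψ d = 0 := by rw [hd, map_sub, hsum', sub_self]
    rw [← hΨ d k, this]
    rfl
  have hd0 : pairT d t = 0 := hF d hdker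
  have hkey : pairThom t (Finsupp.single i 1) = pairThom t (∑ j, b.repr v j • gg j) := by
    have : pairThom t d = 0 := by rw [pairThom_apply]; exact hd0
    rw [hd, map_sub, sub_eq_zero] at this
    exact this
  rw [pairThom_single] at hkey
  rw [hkey, map_sum]
  apply Finset.sum_congr rfl
  intro j _
  rw [map_zsmul, pairThom_apply]

lemma backward {I : Type*} (t : I → Circ) (m : ℕ) (x : Fin m → I → ℤ) (s : Fin m → Circ)
    (hx : ∀ i, t i = ∑ k, x k i • s k) :
    Continuous fun g : I →₀ ℤ => pairT g t := by
  have ht : t = fun i => ∑ k, x k i • s k := funext hx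
  have h2 : (fun g : I →₀ ℤ => pairT g (fun i => ∑ k, x k i • s k))
      = fun g => ∑ k, pairZ g (x k) • s k := funext fun g => pairT_sum g x s
  rw [ht, h2]
  apply continuous_finset_sum
  intro k _
  exact (continuous_of_discreteTopology (f := fun n : ℤ => n • s k)).comp (cont_pairZ (x k))


/--  is continuous iff  for finitely many
 and ; consequently the continuous characters of  are
exactly the maps  for such  (identifying, for , the dual group of
 with the pointwise topology on ). -/
theorem stmt11 (I : Type*) :
    (∀ t : I → Circ,
      (Continuous fun g : I →₀ ℤ => pairT g t) ↔
        ∃ (m : ℕ) (x : Fin m → (I → ℤ)) (s : Fin m → Circ),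
          ∀ i : I, t i = ∑ k, x k i • s k) ∧
    (∀ χ : (I →₀ ℤ) →+ Circ, Continuous χ →
      ∃ (m : ℕ) (x : Fin m → (I → ℤ)) (s : Fin m → Circ),
        ∀ g : I →₀ ℤ, χ g = pairT g fun i => ∑ k, x k i • s k) := by
  constructor
  · intro t
    exact ⟨forward t, fun ⟨m, x, s, hx⟩ => backward t m x s hx⟩
  · intro χ hχ
    set t : I → Circ := fun i => χ (Finsupp.single i 1) with ht
    have hEq : χ = pairThom t := by
      apply Finsupp.addHom_ext
      intro i n
      rw [show Finsupp.single i n = n • Finsupp.single i (1 : ℤ) by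
        rw [Finsupp.smul_single, smul_eq_mul, mul_one]]
      rw [map_zsmul, map_zsmul, pairThom_single]
    have hcont : Continuous fun g : I →₀ ℤ => pairT g t := by
      have he : (fun g : I →₀ ℤ => pairT g t) = χ :=
        funext fun g => by rw [hEq, pairThom_apply]
      rw [he]; exact hχ
    obtain ⟨m, x, s, hx⟩ := forward t hcont
    refine ⟨m, x, s, fun g => ?_⟩
    rw [hEq, pairThom_apply]
    exact congrArg (pairT g) (funext hx)
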